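/- Let q be even, and y ∈ F_{q^3} \ F_q. Then Tr_{F_{q^3}/F_q}(y^{q−q^2} + y^{q^2−q}) ≠ 0, where y^{q−q^2} denotes y^q·y^{−q^2}. -/

import Mathlib

/-!
Write `φ` for the Frobenius `x ↦ x ^ q`, so that `y, φ y, φ² y` are the conjugates of `y` and the
trace of `t` is `t + φ t + φ² t`. With `a, b, c` the three conjugates, the trace in question is
`∑ (b/c + c/b)` over the cyclic permutations, and in characteristic 2 this sum times `abc` equals
`(a + b)(b + c)(c + a)`. So the trace vanishes only if two conjugates coincide, which forces
`φ y = y`, i.e. `y ∈ 𝔽_q`.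
-/

open FiniteField Module

theorem eq_or_eq_or_eq_of_sum_mul_inv_eq_zero {F : Type*} [Field F] (h2 : (2 : F) = 0)
    {a b c : F} (ha : a ≠ 0) (hb : b ≠ 0) (hc : c ≠ 0)
    (h : b * c⁻¹ + c * b⁻¹ + (c * a⁻¹ + a * c⁻¹) + (a * b⁻¹ + b * a⁻¹) = 0) :
    a = b ∨ b = c ∨ c = a := by
  have hprod : (a + b) * (b + c) * (c + a) = 0 := by
    field_simp at h
    linear_combination h + (a * b * c) * h2
  have eq_of_add_eq_zero : ∀ x y : F, x + y = 0 → x = y := fun x y hxy => by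
    linear_combination hxy - y * h2
  rcases mul_eq_zero.mp hprod with hab_bc | hca
  · rcases mul_eq_zero.mp hab_bc with hab | hbc
    · exact .inl (eq_of_add_eq_zero a b hab)
    · exact .inr (.inl (eq_of_add_eq_zero b c hbc))
  · exact .inr (.inr (eq_of_add_eq_zero c a hca))

namespace FiniteField

theorem two_eq_zero_of_even_card {K L : Type*} [Field K] [Fintype K] [Semiring L] [Algebra K L]
    (hK : Even (Fintype.card K)) : (2 : L) = 0 := by
  have hchar : ringChar K = 2 := even_card_iff_char_two.mpr (Nat.even_iff.mp hK)
  have h2 : (2 : K) = 0 := by exact_mod_cast hchar ▸ ringChar.Nat.cast_ringChar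
  rw [← map_ofNat (algebraMap K L) 2, h2, map_zero]

variable {K L : Type*} [Field K] [Fintype K] [Field L] [Finite L] [Algebra K L]

theorem mem_range_algebraMap_of_pow_card_eq_self {x : L} (hx : x ^ Fintype.card K = x) :
    x ∈ Set.range (algebraMap K L) := by
  rw [IsGalois.mem_range_algebraMap_iff_fixed]
  intro f
  obtain ⟨n, rfl⟩ := (bijective_frobeniusAlgEquivOfAlgebraic_pow K L).2 f
  rw [AlgEquiv.coe_pow, coe_frobeniusAlgEquivOfAlgebraic]
  exact Function.iterate_fixed hx n

theorem frobeniusAlgHom_pow_finrank : frobeniusAlgHom K L ^ finrank K L = 1 :=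
  orderOf_frobeniusAlgHom K L ▸ pow_orderOf_eq_one _

theorem frobeniusAlgHom_apply_apply_apply (h3 : finrank K L = 3) (x : L) :
    frobeniusAlgHom K L (frobeniusAlgHom K L (frobeniusAlgHom K L x)) = x := by
  have := congr($(frobeniusAlgHom_pow_finrank (K := K) (L := L)) x)
  rwa [h3, pow_succ, pow_succ, pow_one, AlgHom.mul_apply, AlgHom.mul_apply] at this

theorem algebraMap_trace_eq_add_frobeniusAlgHom (h3 : finrank K L = 3) (x : L) :
    algebraMap K L (Algebra.trace K L x) =
      x + frobeniusAlgHom K L x + frobeniusAlgHom K L (frobeniusAlgHom K L x) := by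
  simp only [algebraMap_trace_eq_sum_pow, h3, Finset.sum_range_succ, Finset.sum_range_zero,
    Nat.card_eq_fintype_card, coe_frobeniusAlgHom, ← pow_mul, pow_zero, pow_one, sq, zero_add]

end FiniteField

theorem trace_nonzero_general (q : ℕ) (hq : Even q)
    (K L3 : Type) [Field K] [Fintype K] [Field L3] [Fintype L3] [Algebra K L3]
    (hcard : Fintype.card K = q)
    (hdim : Module.finrank K L3 = 3)
    (y : L3) (hy : y ∉ Set.range (algebraMap K L3)) :
    Algebra.trace K L3 (y ^ q * (y ^ (q ^ 2))⁻¹ + y ^ (q ^ 2) * (y ^ q)⁻¹) ≠ 0 := by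
  subst hcard
  have hφ3 := frobeniusAlgHom_apply_apply_apply hdim y
  have htrace := algebraMap_trace_eq_add_frobeniusAlgHom hdim
  set φ := frobeniusAlgHom K L3
  have hφ : ∀ x, φ x = x ^ Fintype.card K := fun _ => rfl
  have hφy : φ y ≠ y := fun h => hy (mem_range_algebraMap_of_pow_card_eq_self h)
  have hy0 : y ≠ 0 := by rintro rfl; exact hy ⟨0, map_zero _⟩
  rw [← hφ, sq, pow_mul, ← hφ, ← hφ]
  intro h0
  have hconj := htrace (φ y * (φ (φ y))⁻¹ + φ (φ y) * (φ y)⁻¹)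
  simp only [h0, map_zero, map_add, map_mul, map_inv₀, hφ3] at hconj
  rcases eq_or_eq_or_eq_of_sum_mul_inv_eq_zero (two_eq_zero_of_even_card hq) hy0
    ((map_ne_zero φ).mpr hy0) ((map_ne_zero φ).mpr ((map_ne_zero φ).mpr hy0)) hconj.symm
    with h | h | h
  · exact hφy h.symm
  · exact hφy (φ.injective h).symm
  · exact hφy (by rwa [h] at hφ3)

/-- For `q` even and `y ∈ F_{q³} \ F_q`,
`Tr_{F_{q³}/F_q}(y^{q-q²} + y^{q²-q}) ≠ 0`. -/
theorem trace_nonzero (q : ℕ) (hq : Even q) (hq' : IsPrimePow q)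
    (K L3 : Type) [Field K] [Fintype K] [Field L3] [Fintype L3] [Algebra K L3]
    (hcard : Fintype.card K = q)
    (hdim : Module.finrank K L3 = 3)
    (y : L3) (hy : y ∉ Set.range (algebraMap K L3)) :
    Algebra.trace K L3 (y ^ q * (y ^ (q ^ 2))⁻¹ + y ^ (q ^ 2) * (y ^ q)⁻¹) ≠ 0 :=
  trace_nonzero_general q hq K L3 hcard hdim y hy
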